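/- Let Y and H be nonnegative random variables on a probability space such that for all u > 0 and w > 0: P(Y > u) ≤ u^{-1} · E[min(H, w)] + P(H ≥ w). Then for every p ∈ (0,1): E[Y^p] ≤ (p^{-p}/(1−p)) · E[H^p]. -/

import Mathlib

/-!
By the layer-cake formula `E[Y^p] = p ∫₀^∞ t^(p-1) P(Y > t) dt`; bound the tail with
`w = a t`. The term `P(H ≥ a t)` integrates, by the layer-cake formula again, to
`a^(-p) E[H^p]`. After Fubini the term `t⁻¹ E[min(H, a t)]` contributes
`p E[∫₀^∞ t^(p-2) min(H, a t) dt]`, and the inner integral is `a^(1-p) H^p / (p (1-p))`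
(split at the kink `t = H / a`). The resulting constant
`a^(1-p) / (1-p) + a^(-p)` is minimal at `a = p`, where it equals `p^(-p) / (1-p)`.
-/

open MeasureTheory Set
open scoped ENNReal

lemma lintegral_Ioc_zero_rpow_sub_one {p c : ℝ} (hp : 0 < p) (hc : 0 ≤ c) :
    ∫⁻ t in Ioc 0 c, ENNReal.ofReal (t ^ (p - 1)) = ENNReal.ofReal (c ^ p / p) := by
  have hint : IntervalIntegrable (fun t : ℝ ↦ t ^ (p - 1)) volume 0 c :=
    intervalIntegral.intervalIntegrable_rpow' (by linarith)
  rw [← ofReal_integral_eq_lintegral_ofReal hint.1, ← intervalIntegral.integral_of_le hc,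
    integral_rpow (Or.inl (by linarith)), sub_add_cancel, Real.zero_rpow hp.ne', sub_zero]
  filter_upwards [ae_restrict_mem measurableSet_Ioc] with t ht
  exact Real.rpow_nonneg ht.1.le _

lemma lintegral_Ioi_rpow_of_lt {s c : ℝ} (hs : s < -1) (hc : 0 < c) :
    ∫⁻ t in Ioi c, ENNReal.ofReal (t ^ s) = ENNReal.ofReal (-c ^ (s + 1) / (s + 1)) := by
  rw [← ofReal_integral_eq_lintegral_ofReal (integrableOn_Ioi_rpow_of_lt hs hc),
    integral_Ioi_rpow_of_lt hs hc]
  filter_upwards [ae_restrict_mem measurableSet_Ioi] with t ht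
  exact Real.rpow_nonneg (hc.trans ht).le _

lemma lintegral_Ioi_rpow_sub_two_mul_min {p a h : ℝ} (hp0 : 0 < p) (hp1 : p < 1) (ha : 0 < a)
    (hh : 0 ≤ h) :
    ∫⁻ t in Ioi 0, ENNReal.ofReal (t ^ (p - 2) * min h (a * t)) =
      ENNReal.ofReal (a ^ (1 - p) / (p * (1 - p)) * h ^ p) := by
  rcases hh.eq_or_lt with rfl | hh
  · have hzero : ∀ t ∈ Ioi (0 : ℝ), ENNReal.ofReal (t ^ (p - 2) * min 0 (a * t)) = 0 := by
      intro t ht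
      rw [min_eq_left (mul_nonneg ha.le (le_of_lt ht)), mul_zero, ENNReal.ofReal_zero]
    rw [setLIntegral_congr_fun measurableSet_Ioi hzero, Real.zero_rpow hp0.ne', mul_zero,
      ENNReal.ofReal_zero, lintegral_zero]
  set c := h / a
  have hc : 0 < c := div_pos hh ha
  have hac : a * c = h := mul_div_cancel₀ h ha.ne'
  have below : ∀ t ∈ Ioc 0 c, ENNReal.ofReal (t ^ (p - 2) * min h (a * t)) =
      ENNReal.ofReal a * ENNReal.ofReal (t ^ (p - 1)) := by
    intro t ⟨ht0, htc⟩
    rw [min_eq_right (hac ▸ mul_le_mul_of_nonneg_left htc ha.le), ← ENNReal.ofReal_mul ha.le,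
      show p - 1 = p - 2 + 1 by ring, Real.rpow_add_one ht0.ne']
    ring_nf
  have above : ∀ t ∈ Ioi c, ENNReal.ofReal (t ^ (p - 2) * min h (a * t)) =
      ENNReal.ofReal h * ENNReal.ofReal (t ^ (p - 2)) := by
    intro t ht
    rw [min_eq_left (hac ▸ mul_le_mul_of_nonneg_left (le_of_lt ht) ha.le), mul_comm,
      ENNReal.ofReal_mul hh.le]
  rw [← Ioc_union_Ioi_eq_Ioi hc.le, lintegral_union measurableSet_Ioi (Ioc_disjoint_Ioi le_rfl),
    setLIntegral_congr_fun measurableSet_Ioc below,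
    setLIntegral_congr_fun measurableSet_Ioi above,
    lintegral_const_mul' _ _ ENNReal.ofReal_ne_top, lintegral_const_mul' _ _ ENNReal.ofReal_ne_top,
    lintegral_Ioc_zero_rpow_sub_one hp0 hc.le, lintegral_Ioi_rpow_of_lt (by linarith) hc,
    ← ENNReal.ofReal_mul ha.le, ← ENNReal.ofReal_mul hh.le, ← ENNReal.ofReal_add (by positivity)
      (mul_nonneg hh.le (div_nonneg_of_nonpos (neg_nonpos.2 (by positivity)) (by linarith)))]
  congr 1
  rw [← hac, show p - 2 + 1 = p - 1 by ring, Real.rpow_sub_one hc.ne',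
    Real.mul_rpow ha.le hc.le, Real.rpow_sub ha, Real.rpow_one]
  have : a ^ p ≠ 0 := (Real.rpow_pos_of_pos ha p).ne'
  have : p - 1 ≠ 0 := by linarith
  have : 1 - p ≠ 0 := by linarith
  field_simp
  ring

lemma ofReal_inv_mul_mul_rpow_sub_one {t : ℝ} (ht : 0 < t) (p : ℝ) (x : ℝ≥0∞) :
    ENNReal.ofReal t⁻¹ * x * ENNReal.ofReal (t ^ (p - 1)) = ENNReal.ofReal (t ^ (p - 2)) * x := by
  rw [mul_right_comm, ← ENNReal.ofReal_mul (inv_nonneg.2 ht.le), ← Real.rpow_neg_one,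
    ← Real.rpow_add ht, neg_add_eq_sub, sub_sub, one_add_one_eq_two]

section Moments

variable {Ω : Type*} [MeasurableSpace Ω] {μ : Measure Ω} {H : Ω → ℝ} {p a : ℝ}

lemma lintegral_Ioi_lintegral_rpow_sub_two_mul_min [SFinite μ] (hHm : Measurable H)
    (hH0 : ∀ ω, 0 ≤ H ω) (hp0 : 0 < p) (hp1 : p < 1) (ha : 0 < a) :
    ∫⁻ t in Ioi 0, ∫⁻ ω, ENNReal.ofReal (t ^ (p - 2) * min (H ω) (a * t)) ∂μ =
      ENNReal.ofReal (a ^ (1 - p) / (p * (1 - p))) * ∫⁻ ω, ENNReal.ofReal (H ω ^ p) ∂μ := by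
  have hC : 0 ≤ a ^ (1 - p) / (p * (1 - p)) :=
    div_nonneg (Real.rpow_nonneg ha.le _) (mul_nonneg hp0.le (by linarith))
  have inner : ∀ ω, ∫⁻ t in Ioi 0, ENNReal.ofReal (t ^ (p - 2) * min (H ω) (a * t)) =
      ENNReal.ofReal (a ^ (1 - p) / (p * (1 - p))) * ENNReal.ofReal (H ω ^ p) := fun ω ↦ by
    rw [lintegral_Ioi_rpow_sub_two_mul_min hp0 hp1 ha (hH0 ω), ENNReal.ofReal_mul hC]
  rw [lintegral_lintegral_swap (by fun_prop)]
  simp_rw [inner]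
  exact lintegral_const_mul' _ _ ENNReal.ofReal_ne_top

lemma ofReal_mul_lintegral_Ioi_meas_le_mul_rpow (hHm : AEMeasurable H μ) (hH0 : ∀ ω, 0 ≤ H ω)
    (hp : 0 < p) (ha : 0 < a) :
    ENNReal.ofReal p * ∫⁻ t in Ioi 0, μ {ω | a * t ≤ H ω} * ENNReal.ofReal (t ^ (p - 1)) =
      ENNReal.ofReal (a ^ (-p)) * ∫⁻ ω, ENNReal.ofReal (H ω ^ p) ∂μ := by
  have hset : ∀ t : ℝ, {ω | t ≤ H ω / a} = {ω | a * t ≤ H ω} := fun t ↦ by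
    ext ω; exact le_div_iff₀' ha
  have hpow : ∀ ω, ENNReal.ofReal ((H ω / a) ^ p) =
      ENNReal.ofReal (a ^ (-p)) * ENNReal.ofReal (H ω ^ p) := fun ω ↦ by
    rw [← ENNReal.ofReal_mul (Real.rpow_nonneg ha.le _), Real.div_rpow (hH0 ω) ha.le,
      Real.rpow_neg ha.le, div_eq_inv_mul]
  have := lintegral_rpow_eq_lintegral_meas_le_mul μ
    (Filter.Eventually.of_forall fun ω ↦ div_nonneg (hH0 ω) ha.le) (hHm.div_const a) hp
  simp_rw [hset, hpow] at this
  rw [← this, lintegral_const_mul' _ _ ENNReal.ofReal_ne_top]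

theorem lintegral_rpow_le_of_meas_lt_le [SFinite μ] {Y : Ω → ℝ} (hYm : AEMeasurable Y μ)
    (hHm : Measurable H) (hY0 : ∀ ω, 0 ≤ Y ω) (hH0 : ∀ ω, 0 ≤ H ω) (ha : 0 < a)
    (htail : ∀ u : ℝ, 0 < u → μ {ω | u < Y ω} ≤
      ENNReal.ofReal u⁻¹ * ∫⁻ ω, ENNReal.ofReal (min (H ω) (a * u)) ∂μ + μ {ω | a * u ≤ H ω})
    (hp0 : 0 < p) (hp1 : p < 1) :
    ∫⁻ ω, ENNReal.ofReal (Y ω ^ p) ∂μ ≤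
      ENNReal.ofReal (a ^ (1 - p) / (1 - p) + a ^ (-p)) * ∫⁻ ω, ENNReal.ofReal (H ω ^ p) ∂μ := by
  set A : ℝ → ℝ≥0∞ := fun t ↦ ∫⁻ ω, ENNReal.ofReal (t ^ (p - 2) * min (H ω) (a * t)) ∂μ
  set B : ℝ → ℝ≥0∞ := fun t ↦ μ {ω | a * t ≤ H ω} * ENNReal.ofReal (t ^ (p - 1))
  have hAm : Measurable A := by fun_prop
  have hAB : ∀ t ∈ Ioi 0, μ {ω | t < Y ω} * ENNReal.ofReal (t ^ (p - 1)) ≤ A t + B t := by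
    intro t ht
    have hA : A t = ENNReal.ofReal t⁻¹ * (∫⁻ ω, ENNReal.ofReal (min (H ω) (a * t)) ∂μ) *
        ENNReal.ofReal (t ^ (p - 1)) := by
      rw [ofReal_inv_mul_mul_rpow_sub_one ht, ← lintegral_const_mul' _ _ ENNReal.ofReal_ne_top]
      simp_rw [← ENNReal.ofReal_mul (Real.rpow_nonneg (le_of_lt ht) _)]
      rfl
    rw [hA, ← add_mul]
    gcongr
    exact htail t ht
  calc ∫⁻ ω, ENNReal.ofReal (Y ω ^ p) ∂μ
      = ENNReal.ofReal p * ∫⁻ t in Ioi 0, μ {ω | t < Y ω} * ENNReal.ofReal (t ^ (p - 1)) :=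
        lintegral_rpow_eq_lintegral_meas_lt_mul μ (Filter.Eventually.of_forall hY0) hYm hp0
    _ ≤ ENNReal.ofReal p * ∫⁻ t in Ioi 0, (A t + B t) := by
        gcongr ENNReal.ofReal p * ?_
        exact setLIntegral_mono' measurableSet_Ioi hAB
    _ = ENNReal.ofReal p * (∫⁻ t in Ioi 0, A t) + ENNReal.ofReal p * ∫⁻ t in Ioi 0, B t := by
        rw [lintegral_add_left hAm, mul_add]
    _ = ENNReal.ofReal (a ^ (1 - p) / (1 - p)) * ∫⁻ ω, ENNReal.ofReal (H ω ^ p) ∂μ +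
          ENNReal.ofReal (a ^ (-p)) * ∫⁻ ω, ENNReal.ofReal (H ω ^ p) ∂μ := by
        rw [lintegral_Ioi_lintegral_rpow_sub_two_mul_min hHm hH0 hp0 hp1 ha,
          ofReal_mul_lintegral_Ioi_meas_le_mul_rpow hHm.aemeasurable hH0 hp0 ha, ← mul_assoc,
          ← ENNReal.ofReal_mul hp0.le, ← mul_div_assoc, mul_div_mul_left _ _ hp0.ne']
    _ = _ := by
        rw [← add_mul, ← ENNReal.ofReal_add
          (div_nonneg (Real.rpow_nonneg ha.le _) (by linarith)) (Real.rpow_nonneg ha.le _)]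

end Moments

theorem stmt_7 {Ω : Type*} [MeasurableSpace Ω] (P : Measure Ω) [IsProbabilityMeasure P]
    (Y H : Ω → ℝ) (hYm : Measurable Y) (hHm : Measurable H)
    (hY0 : ∀ ω, 0 ≤ Y ω) (hH0 : ∀ ω, 0 ≤ H ω)
    (htail : ∀ u w : ℝ, 0 < u → 0 < w →
      P {ω | u < Y ω} ≤
        ENNReal.ofReal u⁻¹ * ∫⁻ ω, ENNReal.ofReal (min (H ω) w) ∂P + P {ω | w ≤ H ω})
    (p : ℝ) (hp0 : 0 < p) (hp1 : p < 1) :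
    ∫⁻ ω, ENNReal.ofReal (Y ω ^ p) ∂P ≤
      ENNReal.ofReal (p ^ (-p) / (1 - p)) * ∫⁻ ω, ENNReal.ofReal (H ω ^ p) ∂P := by
  have hconst : p ^ (1 - p) / (1 - p) + p ^ (-p) = p ^ (-p) / (1 - p) := by
    have h1p : 1 - p ≠ 0 := by linarith
    have hpow : p ^ (1 - p) = p * p ^ (-p) := by
      rw [sub_eq_add_neg, Real.rpow_add hp0, Real.rpow_one]
    rw [hpow, div_add' _ _ _ h1p]
    ring
  rw [← hconst]
  exact lintegral_rpow_le_of_meas_lt_le hYm.aemeasurable hHm hY0 hH0 hp0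
    (fun u hu ↦ htail u (p * u) hu (mul_pos hp0 hu)) hp0 hp1
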